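/- For any two finite metric spaces (X,d_X) and (Y,d_Y), the Gromov–Hausdorff distance between their single-linkage ultrametric spaces is at most the Gromov–Hausdorff distance between themselves: d_GH((X,u_SL^X),(Y,u_SL^Y)) ≤ d_GH((X,d_X),(Y,d_Y)). -/

import Mathlib

/-- A distance function `d` is a metric. -/
def IsMetric {X : Type*} (d : X → X → ℝ) : Prop :=
  (∀ x y, d x y = d y x) ∧ (∀ x y, d x y = 0 ↔ x = y) ∧ (∀ x y z, d x z ≤ d x y + d y z)

/-- A distance function is an ultrametric: a metric satisfying the strong triangle
inequality. -/
def IsUltrametricD {X : Type*} (d : X → X → ℝ) : Prop :=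
  IsMetric d ∧ ∀ x y z, d x z ≤ max (d x y) (d y z)

/-- The maximum of the consecutive distances along the chain `x :: l ++ [y]`. -/
def chainMax {X : Type*} (d : X → X → ℝ) : X → List X → X → ℝ
  | x, [], y => d x y
  | x, z :: l, y => max (d x z) (chainMax d z l y)

/-- The single-linkage ultrametric: the minimum over all chains from `x` to `y`
of the maximum of the consecutive distances along the chain. -/
noncomputable def uSL {X : Type*} (d : X → X → ℝ) (x y : X) : ℝ :=
  sInf { r | ∃ l : List X, chainMax d x l y = r }

/-- A correspondence between `X` and `Y`: every point of `X` and every point of `Y`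
occurs in some pair. -/
def IsCorr {X Y : Type*} (τ : Set (X × Y)) : Prop :=
  (∀ x, ∃ y, (x, y) ∈ τ) ∧ (∀ y, ∃ x, (x, y) ∈ τ)

/-- The distortion of a correspondence: the supremum of `|d_X(x,x') − d_Y(y,y')|`
over pairs `(x,y), (x',y')` in the correspondence. -/
noncomputable def corrDist {X Y : Type*} (dX : X → X → ℝ) (dY : Y → Y → ℝ)
    (τ : Set (X × Y)) : ℝ :=
  sSup { v | ∃ p ∈ τ, ∃ q ∈ τ, v = |dX p.1 q.1 - dY p.2 q.2| }

/-- The Gromov–Hausdorff distance: half the infimum over correspondences of their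
distortion. -/
noncomputable def ghDist {X Y : Type*} (dX : X → X → ℝ) (dY : Y → Y → ℝ) : ℝ :=
  (1 / 2) * sInf { r | ∃ τ : Set (X × Y), IsCorr τ ∧ corrDist dX dY τ = r }

/-- Single linkage value between two blocks: minimal cross distance. -/
noncomputable def ellSL {X : Type*} (d : X → X → ℝ) (A B : Finset X) : ℝ :=
  sInf { r | ∃ a ∈ A, ∃ b ∈ B, d a b = r }

/-- Complete linkage value between two blocks: maximal cross distance. -/
noncomputable def ellCL {X : Type*} (d : X → X → ℝ) (A B : Finset X) : ℝ :=
  sSup { r | ∃ a ∈ A, ∃ b ∈ B, d a b = r }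

/-- Average linkage value between two blocks: average cross distance. -/
noncomputable def ellAL {X : Type*} (d : X → X → ℝ) (A B : Finset X) : ℝ :=
  (∑ a ∈ A, ∑ b ∈ B, d a b) / (A.card * B.card)

/-!
A correspondence `τ` of distortion `c` transports chains: if `(x, y), (x', y') ∈ τ`, lifting
every inner point of a chain from `y` to `y'` in `Y` to a `τ`-related point of `X` gives a chain
from `x` to `x'` whose steps are at most `c` longer. Hence `u_SL^X(x, x') ≤ u_SL^Y(y, y') + c`
and symmetrically, so `τ` has distortion at most `c` also between the single-linkage ultrametrics.
-/

section SingleLinkage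

variable {X Y : Type*}

lemma chainMax_mem_range (d : X → X → ℝ) :
    ∀ (x : X) (l : List X) (y : X), chainMax d x l y ∈ Set.range (Function.uncurry d)
  | x, [], y => ⟨(x, y), rfl⟩
  | x, z :: l, y => by
    rcases max_choice (d x z) (chainMax d z l y) with h | h
    · exact ⟨(x, z), h.symm⟩
    · simpa only [chainMax, h] using chainMax_mem_range d z l y

lemma bddBelow_chainMax [Finite X] (d : X → X → ℝ) (x y : X) :
    BddBelow {r | ∃ l : List X, chainMax d x l y = r} :=
  (Set.finite_range (Function.uncurry d)).bddBelow.mono <| by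
    rintro _ ⟨l, rfl⟩
    exact chainMax_mem_range d x l y

lemma uSL_le_chainMax [Finite X] (d : X → X → ℝ) (x y : X) (l : List X) :
    uSL d x y ≤ chainMax d x l y :=
  csInf_le (bddBelow_chainMax d x y) ⟨l, rfl⟩

lemma le_uSL {d : X → X → ℝ} {x y : X} {c : ℝ} (h : ∀ l, c ≤ chainMax d x l y) :
    c ≤ uSL d x y :=
  le_csInf ⟨_, [], rfl⟩ <| by
    rintro _ ⟨l, rfl⟩
    exact h l

variable {dX : X → X → ℝ} {dY : Y → Y → ℝ} {R : X → Y → Prop} {c : ℝ}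

lemma chainMax_map_le_add (hc : ∀ a b a' b', R a b → R a' b' → dX a a' ≤ dY b b' + c)
    {f : Y → X} (hf : ∀ y, R (f y) y) {x' : X} {y' : Y} (hx' : R x' y') :
    ∀ (l : List Y) {x : X} {y : Y}, R x y →
      chainMax dX x (l.map f) x' ≤ chainMax dY y l y' + c
  | [], _, _, hxy => hc _ _ _ _ hxy hx'
  | z :: l, _, _, hxy =>
    calc max (dX _ (f z)) (chainMax dX (f z) (l.map f) x')
        ≤ max (dY _ z + c) (chainMax dY z l y' + c) :=
          max_le_max (hc _ _ _ _ hxy (hf z)) (chainMax_map_le_add hc hf hx' l (hf z))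
      _ = max (dY _ z) (chainMax dY z l y') + c := max_add_add_right _ _ _

lemma uSL_le_uSL_add [Finite X] (hR : ∀ y, ∃ x, R x y)
    (hc : ∀ a b a' b', R a b → R a' b' → dX a a' ≤ dY b b' + c)
    {x x' : X} {y y' : Y} (hxy : R x y) (hxy' : R x' y') :
    uSL dX x x' ≤ uSL dY y y' + c := by
  choose f hf using hR
  refine sub_le_iff_le_add.mp (le_uSL fun l => sub_le_iff_le_add.mpr ?_)
  exact (uSL_le_chainMax dX x x' (l.map f)).trans (chainMax_map_le_add hc hf hxy' l hxy)

end SingleLinkage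

section Distortion

variable {X Y : Type*} (dX : X → X → ℝ) (dY : Y → Y → ℝ)

lemma corrDist_nonneg (τ : Set (X × Y)) : 0 ≤ corrDist dX dY τ :=
  Real.sSup_nonneg <| by
    rintro _ ⟨p, -, q, -, rfl⟩
    exact abs_nonneg _

lemma abs_sub_le_corrDist [Finite X] [Finite Y] {τ : Set (X × Y)} {p q : X × Y}
    (hp : p ∈ τ) (hq : q ∈ τ) : |dX p.1 q.1 - dY p.2 q.2| ≤ corrDist dX dY τ := by
  refine le_csSup ?_ ⟨p, hp, q, hq, rfl⟩
  refine (Set.finite_range fun pq : (X × Y) × (X × Y) =>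
    |dX pq.1.1 pq.2.1 - dY pq.1.2 pq.2.2|).bddAbove.mono ?_
  rintro _ ⟨p, -, q, -, rfl⟩
  exact ⟨(p, q), rfl⟩

lemma corrDist_uSL_le [Finite X] [Finite Y] {τ : Set (X × Y)} (hτ : IsCorr τ) :
    corrDist (uSL dX) (uSL dY) τ ≤ corrDist dX dY τ := by
  have hdist : ∀ a b a' b', (a, b) ∈ τ → (a', b') ∈ τ →
      |dX a a' - dY b b'| ≤ corrDist dX dY τ :=
    fun _ _ _ _ h h' => abs_sub_le_corrDist dX dY h h'
  refine Real.sSup_le ?_ (corrDist_nonneg dX dY τ)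
  rintro _ ⟨p, hp, q, hq, rfl⟩
  refine abs_sub_le_iff.mpr ⟨?_, ?_⟩
  · have := uSL_le_uSL_add (dX := dX) (dY := dY) (R := fun x y => (x, y) ∈ τ) hτ.2
      (fun a b a' b' h h' => by linarith [(abs_sub_le_iff.mp (hdist a b a' b' h h')).1]) hp hq
    linarith
  · have := uSL_le_uSL_add (dX := dY) (dY := dX) (R := fun y x => (x, y) ∈ τ) hτ.1
      (fun b a b' a' h h' => by linarith [(abs_sub_le_iff.mp (hdist a b a' b' h h')).2]) hp hq
    linarith

end Distortion

lemma sInf_image_le_sInf_image {ι : Type*} {s : Set ι} {f g : ι → ℝ}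
    (hf : ∀ i ∈ s, 0 ≤ f i) (hfg : ∀ i ∈ s, f i ≤ g i) :
    sInf (f '' s) ≤ sInf (g '' s) := by
  rcases s.eq_empty_or_nonempty with rfl | hs
  · simp
  refine le_csInf (hs.image g) ?_
  rintro _ ⟨i, hi, rfl⟩
  have hbdd : BddBelow (f '' s) := ⟨0, by rintro _ ⟨j, hj, rfl⟩; exact hf j hj⟩
  exact (csInf_le hbdd ⟨i, hi, rfl⟩).trans (hfg i hi)

theorem stmt4_general {X Y : Type*} [Fintype X] [Fintype Y]
    (dX : X → X → ℝ) (dY : Y → Y → ℝ) :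
    ghDist (uSL dX) (uSL dY) ≤ ghDist dX dY := by
  unfold ghDist
  refine mul_le_mul_of_nonneg_left ?_ (by norm_num)
  exact sInf_image_le_sInf_image (s := {τ | IsCorr τ})
    (fun τ _ => corrDist_nonneg _ _ τ) (fun _ hτ => corrDist_uSL_le dX dY hτ)

/-- for any two finite metric spaces, the Gromov–Hausdorff distance of
their single-linkage ultrametric spaces is at most their Gromov–Hausdorff distance. -/
theorem stmt4 {X Y : Type*} [Fintype X] [Fintype Y] [Nonempty X] [Nonempty Y]
    (dX : X → X → ℝ) (dY : Y → Y → ℝ) (hdX : IsMetric dX) (hdY : IsMetric dY) :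
    ghDist (uSL dX) (uSL dY) ≤ ghDist dX dY :=
  stmt4_general dX dY
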